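/- arXiv:2508.12542 — 8 statements merged into one kernel-verified Lean document; each statement's English description precedes it below -/
import Mathlib

section
/- Main theorem (one key step): Suppose ≿₀, ≿₁, …, ≿ₙ are variational Bewley preferences (uᵢ, cᵢ) with each uᵢ unbounded affine on X = ℝ^d, Preference Diversity holds, and Standard Pareto holds (f ≿ᵢ g for all i ∈ N implies f ≿₀ g). Then there exist α ∈ ℝⁿ₊ and β ∈ ℝ with u₀ = Σᵢ αᵢuᵢ + β and c₀(p) ≥ max_{i∈N} αᵢcᵢ(p) for all p ∈ Δ(S). -/
open Finset ENNReal

/-- `p` is a probability distribution on the finite state space `S`. -/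
def IsProb {S : Type*} [Fintype S] (p : S → ℝ) : Prop :=
  (∀ s, 0 ≤ p s) ∧ ∑ s, p s = 1

/-- `u` is an affine function. -/
def IsAffineFn {X : Type*} [AddCommGroup X] [Module ℝ X] (u : X → ℝ) : Prop :=
  ∀ x y : X, ∀ t : ℝ, u (t • x + (1 - t) • y) = t * u x + (1 - t) * u y

/-- `u` is unbounded. -/
def UnboundedFn {X : Type*} (u : X → ℝ) : Prop :=
  ∀ M : ℝ, ∃ x, M < |u x|

/-- The variational Bewley preference induced by `(u, c)`:
`f ≿ g` iff `∑ p(s)u(f(s)) + c(p) ≥ ∑ p(s)u(g(s))` for all `p ∈ Δ(S)`. -/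
def VBPref {S : Type*} [Fintype S] {X : Type*} (u : X → ℝ)
    (c : (S → ℝ) → ℝ≥0∞) (f g : S → X) : Prop :=
  ∀ p : S → ℝ, IsProb p →
    ((∑ s, p s * u (g s) : ℝ) : EReal) ≤ ((∑ s, p s * u (f s) : ℝ) : EReal) + (c p : EReal)

/-- The Bewley preference induced by `(u, P)`. -/
def BewPref {S : Type*} [Fintype S] {X : Type*} (u : X → ℝ)
    (P : Set (S → ℝ)) (f g : S → X) : Prop :=
  ∀ p ∈ P, (∑ s, p s * u (g s)) ≤ ∑ s, p s * u (f s)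

/-- `min_{p ∈ Δ(S)} c(p) = 0` (the minimum value 0 is attained). -/
def MinZero {S : Type*} [Fintype S] (c : (S → ℝ) → ℝ≥0∞) : Prop :=
  ∃ p : S → ℝ, IsProb p ∧ c p = 0

/-- Convexity of the perception function `c` on the simplex. -/
def ConvexPerc {S : Type*} [Fintype S] (c : (S → ℝ) → ℝ≥0∞) : Prop :=
  ∀ p q : S → ℝ, IsProb p → IsProb q → ∀ t : ℝ, 0 ≤ t → t ≤ 1 →
    c (fun s => t * p s + (1 - t) * q s) ≤
      ENNReal.ofReal t * c p + ENNReal.ofReal (1 - t) * c q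

/-!
On constant acts Pareto says that `u₀ y ≤ u₀ x` whenever `uᵢ y ≤ uᵢ x` for every `i`, i.e. the
linear part `L₀` of `u₀` is nonnegative on the cone `{v | ∀ i, 0 ≤ Lᵢ v}`. Preference diversity
yields vectors `eᵢ` with `Lⱼ eᵢ = δᵢⱼ`, hence `L₀ = ∑ αᵢ Lᵢ` with `αᵢ = L₀ eᵢ ≥ 0`.

Replacing the constant act `x` by `s ↦ x + φ(s) • eᵢ` changes only agent `i`'s utility, by `φ`,
and changes `u₀` by `αᵢ φ`. So Pareto turns every affine minorant `φ` of `cᵢ` on the simplex into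
the affine minorant `αᵢ φ` of `c₀`. Since a convex lower semicontinuous `cᵢ` is the supremum of
its affine minorants (separate a point below the graph from the closed convex epigraph),
`αᵢ cᵢ ≤ c₀`.
-/

lemma IsProb.sum_mul_const {S : Type*} [Fintype S] {p : S → ℝ} (hp : IsProb p) (a : ℝ) :
    ∑ s, p s * a = a := by
  rw [← Finset.sum_mul, hp.2, one_mul]

lemma IsAffineFn.exists_linearMap {X : Type*} [AddCommGroup X] [Module ℝ X] {w : X → ℝ}
    (hw : IsAffineFn w) : ∃ L : X →ₗ[ℝ] ℝ, ∀ x, L x = w x - w 0 := by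
  have hsmul : ∀ (t : ℝ) (x : X), w (t • x) - w 0 = t * (w x - w 0) := fun t x => by
    have := hw x 0 t
    rw [smul_zero, add_zero] at this
    rw [this]; ring
  have hadd : ∀ x y : X, w (x + y) - w 0 = (w x - w 0) + (w y - w 0) := fun x y => by
    have hmid := hw x y (1 / 2)
    have hxy : (2 : ℝ) • ((1 / 2 : ℝ) • x + (1 - 1 / 2 : ℝ) • y) = x + y := by
      rw [smul_add, smul_smul, smul_smul]; norm_num
    rw [← hxy, hsmul, hmid]; ring
  exact ⟨{ toFun := fun x => w x - w 0, map_add' := hadd, map_smul' := hsmul }, fun _ => rfl⟩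

section Duality

variable {ι V : Type*} [AddCommGroup V] [Module ℝ V] [DecidableEq ι]

lemma exists_dual_family (L : ι → V →ₗ[ℝ] ℝ)
    (h : ∀ i, ∃ z, L i z ≠ 0 ∧ ∀ j, j ≠ i → L j z = 0) :
    ∃ e : ι → V, ∀ i j, L j (e i) = if j = i then 1 else 0 := by
  choose z hz hz' using h
  refine ⟨fun i => (L i (z i))⁻¹ • z i, fun i j => ?_⟩
  split_ifs with hji
  · subst hji; simp [hz j]
  · simp [hz' i j hji]

lemma LinearMap.apply_eq_sum_mul_of_nonneg_on_cone [Fintype ι] (L : ι → V →ₗ[ℝ] ℝ) {e : ι → V}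
    (he : ∀ i j, L j (e i) = if j = i then 1 else 0) {L₀ : V →ₗ[ℝ] ℝ}
    (hL₀ : ∀ v, (∀ i, 0 ≤ L i v) → 0 ≤ L₀ v) (v : V) :
    L₀ v = ∑ i, L₀ (e i) * L i v := by
  set w := v - ∑ i, L i v • e i
  have hw : ∀ j, L j w = 0 := fun j => by simp [w, he]
  have hw₀ : L₀ w = 0 :=
    le_antisymm (by simpa using hL₀ (-w) (by simp [hw])) (hL₀ w (by simp [hw]))
  simpa [w, sub_eq_zero, mul_comm] using hw₀

end Duality

section AffineMinorant

variable {S : Type*} [Fintype S]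

/-- On the simplex every affine function has the form `q ↦ ∑ s, q s * φ s`. -/
def IsAffineMinorant (c : (S → ℝ) → ℝ≥0∞) (φ : S → ℝ) : Prop :=
  ∀ q, IsProb q → ((∑ s, q s * φ s : ℝ) : EReal) ≤ c q

lemma isAffineMinorant_const_of_nonpos {c : (S → ℝ) → ℝ≥0∞} {a : ℝ} (ha : a ≤ 0) :
    IsAffineMinorant c fun _ => a := fun q hq => by
  rw [hq.sum_mul_const]
  exact (EReal.coe_nonpos.2 ha).trans (EReal.coe_ennreal_nonneg _)

lemma nonpos_of_isAffineMinorant_const {c : (S → ℝ) → ℝ≥0∞} (hc : MinZero c) {a : ℝ}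
    (h : IsAffineMinorant c fun _ => a) : a ≤ 0 := by
  obtain ⟨p, hp, hp0⟩ := hc
  have := h p hp
  rwa [hp.sum_mul_const, hp0, EReal.coe_ennreal_zero, EReal.coe_nonpos] at this

lemma vbPref_const_left_iff {X : Type*} {u : X → ℝ} {c : (S → ℝ) → ℝ≥0∞} {x : X} {g : S → X}
    {ψ : S → ℝ} (hψ : ∀ s, u (g s) = u x + ψ s) :
    VBPref u c (fun _ => x) g ↔ IsAffineMinorant c ψ := by
  unfold VBPref IsAffineMinorant
  refine forall₂_congr fun q hq => ?_
  have hsum : ∑ s, q s * u (g s) = u x + ∑ s, q s * ψ s := by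
    simp only [hψ, mul_add, Finset.sum_add_distrib, hq.sum_mul_const]
  rw [hsum, hq.sum_mul_const, EReal.coe_add]
  exact (EReal.addLECancellable_coe _).add_le_add_iff_left

def simplexEpigraph (c : (S → ℝ) → ℝ≥0∞) : Set ((S → ℝ) × ℝ) :=
  {x | IsProb x.1 ∧ 0 ≤ x.2 ∧ c x.1 ≤ ENNReal.ofReal x.2}

lemma isClosed_simplexEpigraph {c : (S → ℝ) → ℝ≥0∞} (hc : LowerSemicontinuous c) :
    IsClosed (simplexEpigraph c) :=
  ((isClosed_stdSimplex ℝ S).preimage continuous_fst).inter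
    ((isClosed_le continuous_const continuous_snd).inter
      (hc.isClosed_epigraph.preimage
        (continuous_fst.prodMk (ENNReal.continuous_ofReal.comp continuous_snd))))

lemma convex_simplexEpigraph {c : (S → ℝ) → ℝ≥0∞} (hc : ConvexPerc c) :
    Convex ℝ (simplexEpigraph c) := by
  rintro ⟨q, t⟩ ⟨hq, ht, hqt⟩ ⟨q', t'⟩ ⟨hq', ht', hqt'⟩ a b ha hb hab
  obtain rfl : b = 1 - a := by linarith
  rw [Prod.smul_mk, Prod.smul_mk, Prod.mk_add_mk, smul_eq_mul, smul_eq_mul]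
  refine ⟨convex_stdSimplex ℝ S hq hq' ha hb hab, by positivity, ?_⟩
  calc c (a • q + (1 - a) • q')
      ≤ ENNReal.ofReal a * c q + ENNReal.ofReal (1 - a) * c q' := hc q q' hq hq' a ha (by linarith)
    _ ≤ ENNReal.ofReal a * ENNReal.ofReal t + ENNReal.ofReal (1 - a) * ENNReal.ofReal t' := by
      gcongr
    _ = ENNReal.ofReal (a * t + (1 - a) * t') := by
      rw [← ENNReal.ofReal_mul ha, ← ENNReal.ofReal_mul hb, ← ENNReal.ofReal_add (by positivity)
        (by positivity)]

lemma exists_eq_sum_mul_add_mul (F : ((S → ℝ) × ℝ) →ₗ[ℝ] ℝ) :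
    ∃ (ψ : S → ℝ) (r : ℝ), ∀ q t, F (q, t) = ∑ s, q s * ψ s + r * t := by
  classical
  refine ⟨fun s => F (fun j => if s = j then 1 else 0, 0), F (0, 1), fun q t => ?_⟩
  rw [← F.coprod_comp_inl_inr, LinearMap.coprod_apply, LinearMap.pi_apply_eq_sum_univ,
    ← mul_one t, ← smul_eq_mul t 1, map_smul]
  simp [mul_comm]

lemma IsProb.sum_mul_const_mul_sub {q : S → ℝ} (hq : IsProb q) (ψ : S → ℝ) (k M : ℝ) :
    ∑ s, q s * (k * (ψ s - M)) = k * (∑ s, q s * ψ s - M) := by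
  rw [show ∑ s, q s * (k * (ψ s - M)) = ∑ s, (k * (q s * ψ s) - q s * (k * M)) from
      Finset.sum_congr rfl fun _ _ => by ring,
    Finset.sum_sub_distrib, ← Finset.mul_sum, hq.sum_mul_const]
  ring

theorem exists_isAffineMinorant_le_sum {c : (S → ℝ) → ℝ≥0∞} (hconv : ConvexPerc c)
    (hlsc : LowerSemicontinuous c) (hne : ∃ q, IsProb q ∧ c q ≠ ⊤) {p : S → ℝ} (hp : IsProb p)
    {t : ℝ} (ht : 0 ≤ t) (hlt : ENNReal.ofReal t < c p) :
    ∃ φ, IsAffineMinorant c φ ∧ t ≤ ∑ s, p s * φ s := by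
  obtain ⟨F, M, hF, hFpt⟩ := geometric_hahn_banach_closed_point (convex_simplexEpigraph hconv)
    (isClosed_simplexEpigraph hlsc) (x := (p, t)) fun h => hlt.not_ge h.2.2
  obtain ⟨ψ, r, hFψ⟩ := exists_eq_sum_mul_add_mul (F : ((S → ℝ) × ℝ) →ₗ[ℝ] ℝ)
  have hbelow : ∀ q, IsProb q → c q ≠ ⊤ → ∀ T, (c q).toReal ≤ T → ∑ s, q s * ψ s + r * T < M :=
    fun q hq hfin T hT => by
      rw [← hFψ]
      refine hF _ ⟨hq, toReal_nonneg.trans hT, ?_⟩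
      rw [← ENNReal.ofReal_toReal hfin]
      exact ENNReal.ofReal_le_ofReal hT
  -- the epigraph is closed upwards, so the separating functional cannot increase vertically
  have hr : r ≤ 0 := by
    obtain ⟨q, hq, hfin⟩ := hne
    by_contra! hr
    have hT := hbelow q hq hfin _ (le_max_left _ ((M - ∑ s, q s * ψ s) / r))
    have : (M - ∑ s, q s * ψ s) / r * r ≤ max (c q).toReal ((M - ∑ s, q s * ψ s) / r) * r :=
      mul_le_mul_of_nonneg_right (le_max_right _ _) hr.le
    rw [div_mul_cancel₀ _ hr.ne'] at this
    linarith
  set D := ∑ s, p s * ψ s - M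
  have hD : -r * t < D := by
    have := hFψ p t ▸ hFpt
    linarith
  have hD₀ : 0 < D := by nlinarith
  have hk : 0 ≤ t / D := div_nonneg ht hD₀.le
  -- the scaling `t / D` gives the value `t` at `p`, and `t / D * (-r) ≤ 1` keeps it below `c`
  refine ⟨fun s => t / D * (ψ s - M), fun q hq => ?_, ?_⟩
  · rcases eq_or_ne (c q) ⊤ with htop | hfin
    · simp [htop]
    rw [hq.sum_mul_const_mul_sub, ← EReal.coe_ennreal_toReal hfin, EReal.coe_le_coe_iff]
    have hC := toReal_nonneg (a := c q)
    calc t / D * (∑ s, q s * ψ s - M) ≤ t / D * (-r * (c q).toReal) :=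
          mul_le_mul_of_nonneg_left (by linarith [hbelow q hq hfin _ le_rfl]) hk
      _ = -r * t / D * (c q).toReal := by ring
      _ ≤ 1 * (c q).toReal := mul_le_mul_of_nonneg_right ((div_le_one hD₀).2 hD.le) hC
      _ = (c q).toReal := one_mul _
  · rw [hp.sum_mul_const_mul_sub, div_mul_cancel₀ _ hD₀.ne']

theorem ofReal_mul_le_of_forall_isAffineMinorant {c c' : (S → ℝ) → ℝ≥0∞}
    (hconv : ConvexPerc c) (hlsc : LowerSemicontinuous c) (hne : ∃ q, IsProb q ∧ c q ≠ ⊤)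
    {a : ℝ} (ha : 0 ≤ a) (h : ∀ φ, IsAffineMinorant c φ → IsAffineMinorant c' fun s => a * φ s)
    {p : S → ℝ} (hp : IsProb p) : ENNReal.ofReal a * c p ≤ c' p := by
  refine ENNReal.le_of_forall_nnreal_lt fun r hr => ?_
  have ha : 0 < a := by
    refine ha.lt_of_ne fun ha₀ => ?_
    simp [← ha₀] at hr
  obtain ⟨φ, hφ, hle⟩ := exists_isAffineMinorant_le_sum hconv hlsc hne hp (t := r / a)
    (by positivity) (by
      rwa [ENNReal.ofReal_div_of_pos ha, ofReal_coe_nnreal, ENNReal.div_lt_iff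
        (Or.inl (ENNReal.ofReal_pos.2 ha).ne') (Or.inl ENNReal.ofReal_ne_top), mul_comm])
  have hr' : (r : ℝ) ≤ ∑ s, p s * (a * φ s) := by
    rw [div_le_iff₀' ha] at hle
    simpa [Finset.mul_sum, mul_left_comm] using hle
  rw [← EReal.coe_ennreal_le_coe_ennreal_iff, EReal.coe_nnreal_eq_coe_real]
  exact (EReal.coe_le_coe_iff.2 hr').trans (h φ hφ p hp)

end AffineMinorant

section Pareto

variable {S ι X : Type*} [Fintype S] {u : ι → X → ℝ} {c : ι → (S → ℝ) → ℝ≥0∞} {u₀ : X → ℝ}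
  {c₀ : (S → ℝ) → ℝ≥0∞}

lemma le_of_pareto_const
    (hpar : ∀ f g : S → X, (∀ i, VBPref (u i) (c i) f g) → VBPref u₀ c₀ f g)
    (hc₀ : MinZero c₀) {x y : X} (h : ∀ i, u i y ≤ u i x) : u₀ y ≤ u₀ x := by
  have hshift : ∀ w : X → ℝ, ∀ s : S, w y = w x + (w y - w x) := fun _ _ => by ring
  have := (vbPref_const_left_iff (hshift u₀)).1 <| hpar _ _ fun i =>
    (vbPref_const_left_iff (hshift (u i))).2 (isAffineMinorant_const_of_nonpos (by linarith [h i]))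
  linarith [nonpos_of_isAffineMinorant_const hc₀ this]

lemma isAffineMinorant_mul_of_pareto
    (hpar : ∀ f g : S → X, (∀ i, VBPref (u i) (c i) f g) → VBPref u₀ c₀ f g)
    {i : ι} {x : X} {γ : ℝ → X} {a : ℝ} (hi : ∀ t, u i (γ t) = u i x + t)
    (hj : ∀ j, j ≠ i → ∀ t, u j (γ t) = u j x) (h₀ : ∀ t, u₀ (γ t) = u₀ x + a * t)
    {φ : S → ℝ} (hφ : IsAffineMinorant (c i) φ) : IsAffineMinorant c₀ fun s => a * φ s := by
  refine (vbPref_const_left_iff (g := γ ∘ φ) fun s => h₀ (φ s)).1 (hpar _ _ fun j => ?_)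
  by_cases hji : j = i
  · subst hji
    exact (vbPref_const_left_iff fun s => hi (φ s)).2 hφ
  · exact (vbPref_const_left_iff (ψ := fun _ => 0) fun s => by simp [hj j hji]).2
      (isAffineMinorant_const_of_nonpos le_rfl)

end Pareto

theorem stmt4_general {S : Type*} [Fintype S] {d n : ℕ}
    (u : Fin n → EuclideanSpace ℝ (Fin d) → ℝ) (c : Fin n → (S → ℝ) → ℝ≥0∞)
    (u0 : EuclideanSpace ℝ (Fin d) → ℝ) (c0 : (S → ℝ) → ℝ≥0∞)
    (hu : ∀ i, IsAffineFn (u i))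
    (hc : ∀ i, MinZero (c i)) (hconv : ∀ i, ConvexPerc (c i))
    (hlsc : ∀ i, LowerSemicontinuous (c i))
    (hu0 : IsAffineFn u0) (hc0 : MinZero c0)
    (hdiv : ∀ i, ∃ xb xu : EuclideanSpace ℝ (Fin d),
      u i xu < u i xb ∧ ∀ j, j ≠ i → u j xb = u j xu)
    (hpar : ∀ f g : S → EuclideanSpace ℝ (Fin d),
      (∀ i, VBPref (u i) (c i) f g) → VBPref u0 c0 f g) :
    ∃ (α : Fin n → ℝ) (β : ℝ), (∀ i, 0 ≤ α i) ∧
      (∀ x, u0 x = ∑ i, α i * u i x + β) ∧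
      ∀ p : S → ℝ, IsProb p → ∀ i, ENNReal.ofReal (α i) * c i p ≤ c0 p := by
  choose L hL using fun i => (hu i).exists_linearMap
  obtain ⟨L₀, hL₀⟩ := hu0.exists_linearMap
  have hcone : ∀ v, (∀ i, 0 ≤ L i v) → 0 ≤ L₀ v := fun v hv => by
    have := le_of_pareto_const hpar hc0 (x := v) (y := 0) fun i => by linarith [hL i v, hv i]
    linarith [hL₀ v]
  obtain ⟨e, he⟩ := exists_dual_family L fun i => by
    obtain ⟨xb, xu, hlt, heq⟩ := hdiv i
    refine ⟨xb - xu, ?_, fun j hj => ?_⟩ <;> rw [map_sub, hL, hL]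
    · linarith
    · rw [heq j hj]; ring
  have hα : ∀ i, 0 ≤ L₀ (e i) := fun i => hcone _ fun j => by rw [he]; split_ifs <;> norm_num
  have hline : ∀ (w : EuclideanSpace ℝ (Fin d) → ℝ) (Lw : EuclideanSpace ℝ (Fin d) →ₗ[ℝ] ℝ),
      (∀ x, Lw x = w x - w 0) → ∀ i t, w (t • e i) = w 0 + Lw (e i) * t :=
    fun w Lw hLw i t => by rw [mul_comm, ← smul_eq_mul, ← map_smul, hLw]; ring
  refine ⟨fun i => L₀ (e i), u0 0 - ∑ i, L₀ (e i) * u i 0, hα, fun x => ?_, fun p hp i => ?_⟩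
  · have hrep := LinearMap.apply_eq_sum_mul_of_nonneg_on_cone L he hcone x
    simp only [hL _ x, mul_sub, Finset.sum_sub_distrib] at hrep
    rw [hL₀ x] at hrep
    dsimp only
    linarith
  · obtain ⟨q, hq, hq₀⟩ := hc i
    refine ofReal_mul_le_of_forall_isAffineMinorant (hconv i) (hlsc i) ⟨q, hq, by simp [hq₀]⟩
      (hα i) (fun φ hφ => isAffineMinorant_mul_of_pareto hpar (γ := fun t => t • e i)
        (fun t => ?_) (fun j hj t => ?_) (hline u0 L₀ hL₀ i) hφ) hp
    · simpa [he] using hline (u i) (L i) (hL i) i t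
    · simpa [he, hj] using hline (u j) (L j) (hL j) i t

theorem stmt4 {S : Type*} [Fintype S] {d n : ℕ} (hn : 2 ≤ n)
    (u : Fin n → EuclideanSpace ℝ (Fin d) → ℝ) (c : Fin n → (S → ℝ) → ℝ≥0∞)
    (u0 : EuclideanSpace ℝ (Fin d) → ℝ) (c0 : (S → ℝ) → ℝ≥0∞)
    (hu : ∀ i, IsAffineFn (u i)) (hub : ∀ i, UnboundedFn (u i))
    (hc : ∀ i, MinZero (c i)) (hconv : ∀ i, ConvexPerc (c i))
    (hlsc : ∀ i, LowerSemicontinuous (c i))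
    (hu0 : IsAffineFn u0) (hub0 : UnboundedFn u0) (hc0 : MinZero c0)
    (hconv0 : ConvexPerc c0) (hlsc0 : LowerSemicontinuous c0)
    (hdiv : ∀ i, ∃ xb xu : EuclideanSpace ℝ (Fin d),
      u i xu < u i xb ∧ ∀ j, j ≠ i → u j xb = u j xu)
    (hpar : ∀ f g : S → EuclideanSpace ℝ (Fin d),
      (∀ i, VBPref (u i) (c i) f g) → VBPref u0 c0 f g) :
    ∃ (α : Fin n → ℝ) (β : ℝ), (∀ i, 0 ≤ α i) ∧
      (∀ x, u0 x = ∑ i, α i * u i x + β) ∧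
      ∀ p : S → ℝ, IsProb p → ∀ i, ENNReal.ofReal (α i) * c i p ≤ c0 p :=
  stmt4_general u c u0 c0 hu hc hconv hlsc hu0 hc0 hdiv hpar
end

section
/- Proposition (transitive planner, sufficiency): Suppose each individual i ∈ N has a variational Bewley preference (uᵢ, cᵢ) and the planner has a Bewley preference (u₀, P₀). If there exist α ∈ ℝⁿ₊, β ∈ ℝ with u₀ = Σᵢ αᵢuᵢ + β and P₀ ⊆ ⋂_{i: αᵢ>0} cᵢ⁻¹(0), then Standard Pareto holds: f ≿ᵢ g for all i ∈ N implies f ≿₀ g. -/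
open Finset ENNReal

theorem stmt11 {S : Type*} [Fintype S] {d n : ℕ}
    (u : Fin n → EuclideanSpace ℝ (Fin d) → ℝ) (c : Fin n → (S → ℝ) → ℝ≥0∞)
    (u0 : EuclideanSpace ℝ (Fin d) → ℝ) (P0 : Set (S → ℝ))
    (hu : ∀ i, IsAffineFn (u i)) (hc : ∀ i, MinZero (c i))
    (hu0 : IsAffineFn u0)
    (hP0 : P0.Nonempty ∧ IsClosed P0 ∧ Convex ℝ P0 ∧ ∀ p ∈ P0, IsProb p)
    (α : Fin n → ℝ) (β : ℝ) (hα : ∀ i, 0 ≤ α i)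
    (hrep : ∀ x, u0 x = ∑ i, α i * u i x + β)
    (hsub : ∀ p ∈ P0, ∀ i, 0 < α i → c i p = 0) :
    ∀ f g : S → EuclideanSpace ℝ (Fin d),
      (∀ i, VBPref (u i) (c i) f g) → BewPref u0 P0 f g := by
  intro f g hfg p hp
  have hprob := hP0.2.2.2 p hp
  have key : ∀ i, α i * ∑ s, p s * u i (g s) ≤ α i * ∑ s, p s * u i (f s) := by
    intro i
    rcases eq_or_lt_of_le (hα i) with h | h
    · rw [← h]; simp
    · have hci : c i p = 0 := hsub p hp i h
      have := hfg i p hprob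
      rw [hci] at this
      have h2 : ((∑ s, p s * u i (g s) : ℝ) : EReal) ≤ ((∑ s, p s * u i (f s) : ℝ) : EReal) := by
        simpa using this
      exact mul_le_mul_of_nonneg_left (by exact_mod_cast h2) (hα i)
  simp only [hrep, mul_add, Finset.sum_add_distrib, Finset.mul_sum]
  have hb : ∑ s, p s * β = β := by
    rw [← Finset.sum_mul, hprob.2, one_mul]
  rw [hb]
  gcongr ?_ + β
  rw [Finset.sum_comm]
  nth_rewrite 2 [Finset.sum_comm]
  apply Finset.sum_le_sum
  intro i _
  have := key i
  simpa [Finset.mul_sum, mul_comm, mul_assoc, mul_left_comm] using this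
end

section
/- Proposition (Bewley individuals, sufficiency): Suppose each individual i ∈ N has a Bewley preference (uᵢ, Pᵢ) and the planner has a variational Bewley preference (u₀, c₀). If there exist α ∈ ℝⁿ₊, β ∈ ℝ with u₀ = Σᵢ αᵢuᵢ + β and dom c₀ = {p : c₀(p) < ∞} ⊆ ⋂_{i: αᵢ>0} Pᵢ, then Standard Pareto holds. -/
open Finset ENNReal

/- With `∑ p = 1`, the planner's expected utility under `p` is `∑ αᵢ · (expected uᵢ) + β`.
At a `p` of finite cost every individual with `αᵢ > 0` holds `p` as a prior, so each weighted term
favours `f`; the cost `c₀(p) ≥ 0` only helps, and at infinite cost the inequality is trivial. -/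

lemma sum_mul_sum_add_const {S ι X : Type*} [Fintype S] [Fintype ι] {p : S → ℝ}
    (hp : ∑ s, p s = 1) (α : ι → ℝ) (β : ℝ) (u : ι → X → ℝ) (h : S → X) :
    ∑ s, p s * (∑ i, α i * u i (h s) + β) = ∑ i, α i * ∑ s, p s * u i (h s) + β := by
  simp only [mul_add, Finset.sum_add_distrib, ← Finset.sum_mul, hp, one_mul, Finset.mul_sum]
  rw [Finset.sum_comm]
  congr 1
  refine Finset.sum_congr rfl fun i _ => Finset.sum_congr rfl fun s _ => by ring

lemma EReal.coe_le_coe_add_coe_ennreal {a b : ℝ} {c : ℝ≥0∞} (h : c ≠ ⊤ → a ≤ b) :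
    (a : EReal) ≤ b + c := by
  by_cases hc : c = ⊤
  · simp [hc, EReal.add_top_of_ne_bot]
  · exact (EReal.coe_le_coe_iff.mpr (h hc)).trans
      (le_add_of_nonneg_right (EReal.coe_ennreal_nonneg c))

lemma sum_mul_le_sum_mul_of_pos_imp_le {ι : Type*} [Fintype ι] {α a b : ι → ℝ}
    (hα : ∀ i, 0 ≤ α i) (hab : ∀ i, 0 < α i → a i ≤ b i) :
    ∑ i, α i * a i ≤ ∑ i, α i * b i := by
  refine Finset.sum_le_sum fun i _ => ?_
  rcases (hα i).lt_or_eq with hi | hi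
  · exact mul_le_mul_of_nonneg_left (hab i hi) hi.le
  · simp [← hi]

theorem stmt12_general {S : Type*} [Fintype S] {d n : ℕ}
    (u : Fin n → EuclideanSpace ℝ (Fin d) → ℝ) (P : Fin n → Set (S → ℝ))
    (u0 : EuclideanSpace ℝ (Fin d) → ℝ) (c0 : (S → ℝ) → ℝ≥0∞)
    (α : Fin n → ℝ) (β : ℝ) (hα : ∀ i, 0 ≤ α i)
    (hrep : ∀ x, u0 x = ∑ i, α i * u i x + β)
    (hdom : ∀ p : S → ℝ, IsProb p → c0 p ≠ ⊤ → ∀ i, 0 < α i → p ∈ P i) :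
    ∀ f g : S → EuclideanSpace ℝ (Fin d),
      (∀ i, BewPref (u i) (P i) f g) → VBPref u0 c0 f g := by
  intro f g hfg p hp
  refine EReal.coe_le_coe_add_coe_ennreal fun hc => ?_
  simp only [hrep, sum_mul_sum_add_const hp.2]
  gcongr ?_ + β
  exact sum_mul_le_sum_mul_of_pos_imp_le hα fun i hi => hfg i p (hdom p hp hc i hi)

theorem stmt12 {S : Type*} [Fintype S] {d n : ℕ}
    (u : Fin n → EuclideanSpace ℝ (Fin d) → ℝ) (P : Fin n → Set (S → ℝ))
    (u0 : EuclideanSpace ℝ (Fin d) → ℝ) (c0 : (S → ℝ) → ℝ≥0∞)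
    (hu : ∀ i, IsAffineFn (u i))
    (hP : ∀ i, (P i).Nonempty ∧ IsClosed (P i) ∧ Convex ℝ (P i) ∧ ∀ p ∈ P i, IsProb p)
    (hu0 : IsAffineFn u0) (hc0 : MinZero c0)
    (α : Fin n → ℝ) (β : ℝ) (hα : ∀ i, 0 ≤ α i)
    (hrep : ∀ x, u0 x = ∑ i, α i * u i x + β)
    (hdom : ∀ p : S → ℝ, IsProb p → c0 p ≠ ⊤ → ∀ i, 0 < α i → p ∈ P i) :
    ∀ f g : S → EuclideanSpace ℝ (Fin d),
      (∀ i, BewPref (u i) (P i) f g) → VBPref u0 c0 f g :=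
  stmt12_general u P u0 c0 α β hα hrep hdom
end

section
/- Proposition (Liberalism, sufficiency direction): Suppose each i ∈ N ∪ {0} has a variational Bewley preference (uᵢ, cᵢ), Preference Diversity holds with witnesses x̄ⁱ, x̲ⁱ, and there exist α ∈ ℝⁿ₊, β ∈ ℝ with u₀ = Σᵢ αᵢuᵢ + β and c₀(p) ≥ max_i αᵢcᵢ(p) for all p ∈ Δ(S). Then Liberalism holds: for each i ∈ N and all acts f, g taking values on the line through x̄ⁱ and x̲ⁱ, f ≿ᵢ g implies f ≿₀ g. -/
/-!
On the line through `x̄ⁱ` and `x̲ⁱ` every `uⱼ` with `j ≠ i` is constant, so there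
`u₀ = αᵢ uᵢ + K` for a constant `K`. Expected `u₀`-utilities are then the same positive affine
transform of expected `uᵢ`-utilities, and scaling the inequality defining `f ≿ᵢ g` by `αᵢ`
turns the cost `cᵢ(p)` into `αᵢ cᵢ(p) ≤ c₀(p)`.
-/

open Finset ENNReal

theorem EReal.coe_le_coe_add_coe_ennreal_iff (x y : ℝ) (c : ℝ≥0∞) :
    (x : EReal) ≤ y + c ↔ ENNReal.ofReal (x - y) ≤ c := by
  induction c with
  | top => simp
  | coe r =>
    rw [ENNReal.ofReal_le_iff_le_toReal ENNReal.coe_ne_top, ENNReal.coe_toReal,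
      sub_le_iff_le_add', ← EReal.coe_le_coe_iff, EReal.coe_add]
    rfl

theorem IsAffineFn.apply_line_eq_of_eq {X : Type*} [AddCommGroup X] [Module ℝ X]
    {u : X → ℝ} (hu : IsAffineFn u) {x y : X} (h : u x = u y) (t : ℝ) :
    u (t • x + (1 - t) • y) = u y := by
  rw [hu, h]
  ring

theorem apply_eq_mul_add_of_eq_sum {ι X : Type*} [Fintype ι] {u : ι → X → ℝ} {u₀ : X → ℝ}
    {α : ι → ℝ} {β : ℝ} (hrep : ∀ x, u₀ x = ∑ j, α j * u j x + β) {i : ι} {x y : X}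
    (h : ∀ j, j ≠ i → u j x = u j y) :
    u₀ x = α i * u i x + (u₀ y - α i * u i y) := by
  have hdiff : u₀ x - u₀ y = α i * (u i x - u i y) :=
    calc u₀ x - u₀ y = ∑ j, α j * (u j x - u j y) := by
          simp only [hrep, mul_sub, Finset.sum_sub_distrib]
          ring
      _ = α i * (u i x - u i y) :=
          Finset.sum_eq_single i (fun j _ hj => by rw [h j hj, sub_self, mul_zero])
            (fun hi => absurd (Finset.mem_univ i) hi)
  linarith

theorem IsProb.sum_mul_affine {S X : Type*} [Fintype S] {p : S → ℝ} (hp : IsProb p)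
    {v w : X → ℝ} {a K : ℝ} {h : S → X} (hvw : ∀ s, v (h s) = a * w (h s) + K) :
    ∑ s, p s * v (h s) = a * ∑ s, p s * w (h s) + K := by
  simp only [hvw, mul_add, Finset.sum_add_distrib, Finset.mul_sum, ← Finset.sum_mul, hp.2,
    one_mul]
  congr 1
  exact Finset.sum_congr rfl fun s _ => by ring

theorem VBPref.of_affine {S X : Type*} [Fintype S] {v w : X → ℝ} {c c' : (S → ℝ) → ℝ≥0∞}
    {a K : ℝ} (ha : 0 ≤ a) (hc : ∀ p, IsProb p → ENNReal.ofReal a * c p ≤ c' p)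
    {f g : S → X} (hf : ∀ s, v (f s) = a * w (f s) + K) (hg : ∀ s, v (g s) = a * w (g s) + K)
    (hfg : VBPref w c f g) : VBPref v c' f g := by
  intro p hp
  have hwp := (EReal.coe_le_coe_add_coe_ennreal_iff _ _ _).mp (hfg p hp)
  rw [hp.sum_mul_affine hf, hp.sum_mul_affine hg, EReal.coe_le_coe_add_coe_ennreal_iff]
  calc ENNReal.ofReal (a * ∑ s, p s * w (g s) + K - (a * ∑ s, p s * w (f s) + K))
      = ENNReal.ofReal a * ENNReal.ofReal (∑ s, p s * w (g s) - ∑ s, p s * w (f s)) := by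
        rw [← ENNReal.ofReal_mul ha]
        ring_nf
    _ ≤ ENNReal.ofReal a * c p := by gcongr
    _ ≤ c' p := hc p hp

theorem stmt13_general {S : Type*} [Fintype S] {d n : ℕ}
    (u : Fin n → EuclideanSpace ℝ (Fin d) → ℝ) (c : Fin n → (S → ℝ) → ℝ≥0∞)
    (u0 : EuclideanSpace ℝ (Fin d) → ℝ) (c0 : (S → ℝ) → ℝ≥0∞)
    (hu : ∀ i, IsAffineFn (u i))
    (xb xu : Fin n → EuclideanSpace ℝ (Fin d))
    (hdiv : ∀ i, u i (xu i) < u i (xb i) ∧ ∀ j, j ≠ i → u j (xb i) = u j (xu i))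
    (α : Fin n → ℝ) (β : ℝ) (hα : ∀ i, 0 ≤ α i)
    (hrep : ∀ x, u0 x = ∑ i, α i * u i x + β)
    (hineq : ∀ p : S → ℝ, IsProb p → ∀ i, ENNReal.ofReal (α i) * c i p ≤ c0 p) :
    ∀ i, ∀ f g : S → EuclideanSpace ℝ (Fin d),
      (∀ s, ∃ t : ℝ, f s = t • xb i + (1 - t) • xu i) →
      (∀ s, ∃ t : ℝ, g s = t • xb i + (1 - t) • xu i) →
      VBPref (u i) (c i) f g → VBPref u0 c0 f g := by
  intro i f g hf hg hfg
  have hline : ∀ x, (∃ t : ℝ, x = t • xb i + (1 - t) • xu i) →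
      u0 x = α i * u i x + (u0 (xu i) - α i * u i (xu i)) := by
    rintro x ⟨t, rfl⟩
    exact apply_eq_mul_add_of_eq_sum hrep fun j hj =>
      (hu j).apply_line_eq_of_eq ((hdiv i).2 j hj) t
  exact hfg.of_affine (hα i) (fun p hp => hineq p hp i) (fun s => hline _ (hf s))
    (fun s => hline _ (hg s))

theorem stmt13 {S : Type*} [Fintype S] {d n : ℕ}
    (u : Fin n → EuclideanSpace ℝ (Fin d) → ℝ) (c : Fin n → (S → ℝ) → ℝ≥0∞)
    (u0 : EuclideanSpace ℝ (Fin d) → ℝ) (c0 : (S → ℝ) → ℝ≥0∞)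
    (hu : ∀ i, IsAffineFn (u i)) (hc : ∀ i, MinZero (c i))
    (hu0 : IsAffineFn u0) (hc0 : MinZero c0)
    (xb xu : Fin n → EuclideanSpace ℝ (Fin d))
    (hdiv : ∀ i, u i (xu i) < u i (xb i) ∧ ∀ j, j ≠ i → u j (xb i) = u j (xu i))
    (α : Fin n → ℝ) (β : ℝ) (hα : ∀ i, 0 ≤ α i)
    (hrep : ∀ x, u0 x = ∑ i, α i * u i x + β)
    (hineq : ∀ p : S → ℝ, IsProb p → ∀ i, ENNReal.ofReal (α i) * c i p ≤ c0 p) :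
    ∀ i, ∀ f g : S → EuclideanSpace ℝ (Fin d),
      (∀ s, ∃ t : ℝ, f s = t • xb i + (1 - t) • xu i) →
      (∀ s, ∃ t : ℝ, g s = t • xb i + (1 - t) • xu i) →
      VBPref (u i) (c i) f g → VBPref u0 c0 f g :=
  stmt13_general u c u0 c0 hu xb xu hdiv α β hα hrep hineq
end

section
/- Counterexample showing the converse of the main theorem fails: Let S = {s₀, s₁}, N = {1,2}, identify p ∈ Δ(S) with p₁ = p(s₁). Define u₁ = u₂ with acts f, g such that u₁(f(s₀)) = u₁(g(s₀)) = 0, u₁(f(s₁)) = 2, u₁(g(s₁)) = 4, and c₁(p₁) = c₂(p₁) = 2p₁. Then f ∼₁ g and f ∼₂ g. With u₀ = ½u₁ + ½u₂ and c₀ = ½c₁, the conditions u₀ = Σαᵢuᵢ and c₀(p) ≥ max_i αᵢcᵢ(p) (with α₁ = α₂ = ½... note max_i ½·2p₁ = p₁ = c₀(p₁)) hold, yet Standard Pareto fails: at p₁ = 1, u₀(f(s₁)) + c₀(1) = 3 < 4 = u₀(g(s₁)), so f ⋡₀ g while f ≿ᵢ g for i = 1, 2. -/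
open Finset ENNReal

theorem stmt14 :
    ∃ (u : ℝ → ℝ) (f g : Bool → ℝ) (c1 c0 : (Bool → ℝ) → ℝ≥0∞),
      u = id ∧
      f = (fun b => if b then 2 else 0) ∧
      g = (fun b => if b then 4 else 0) ∧
      c1 = (fun p => ENNReal.ofReal (2 * p true)) ∧
      c0 = (fun p => ENNReal.ofReal (p true)) ∧
      -- f ∼₁ g and f ∼₂ g (individuals 1 and 2 share (u, c1))
      (VBPref u c1 f g ∧ VBPref u c1 g f) ∧
      -- utilitarian aggregation u0 = ½u₁ + ½u₂ (with u0 = u1 = u2 = u)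
      (∀ x : ℝ, u x = (1/2 : ℝ) * u x + (1/2 : ℝ) * u x) ∧
      -- c0(p) ≥ max_i αᵢcᵢ(p) with α₁ = α₂ = ½
      (∀ p : Bool → ℝ, IsProb p → ENNReal.ofReal (1/2) * c1 p ≤ c0 p) ∧
      -- yet Standard Pareto fails: f ⋡₀ g
      ¬ VBPref u c0 f g := by
  refine ⟨id, (fun b => if b then 2 else 0), (fun b => if b then 4 else 0),
    (fun p => ENNReal.ofReal (2 * p true)), (fun p => ENNReal.ofReal (p true)),
    rfl, rfl, rfl, rfl, rfl, ⟨?_, ?_⟩, fun x => by ring, ?_, ?_⟩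
  · intro p hp
    have h0 : (0:ℝ) ≤ p true := hp.1 true
    rw [EReal.coe_ennreal_ofReal, max_eq_left (by linarith), ← EReal.coe_add,
      EReal.coe_le_coe_iff]
    simp [Fintype.sum_bool]
    nlinarith
  · intro p hp
    have h0 : (0:ℝ) ≤ p true := hp.1 true
    rw [EReal.coe_ennreal_ofReal, max_eq_left (by linarith), ← EReal.coe_add,
      EReal.coe_le_coe_iff]
    simp [Fintype.sum_bool]
    nlinarith
  · intro p hp
    have h0 : (0:ℝ) ≤ p true := hp.1 true
    rw [← ENNReal.ofReal_mul (by norm_num)]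
    apply ENNReal.ofReal_le_ofReal
    linarith
  · intro h
    have hp : IsProb (fun b : Bool => if b then (1:ℝ) else 0) :=
      ⟨fun s => by cases s <;> norm_num, by simp [Fintype.sum_bool]⟩
    have := h _ hp
    simp [Fintype.sum_bool] at this
    rw [show (1:EReal) = ((1:ℝ):EReal) from rfl, ← EReal.coe_add,
      EReal.coe_le_coe_iff] at this
    norm_num at this
end

section
/- A variational Bewley preference that is not a Bewley preference violates transitivity: if c: Δ(S) → [0,∞] takes some value strictly between 0 and +∞ (i.e., c(q) ∈ (0, ∞) for some q ∈ Δ(S)), with u unbounded affine on X = ℝ^d, then there exist acts f, g, h with f ≿ g and g ≿ h but not f ≿ h. -/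
open Finset ENNReal

/-
Since `c` is convex and lower semicontinuous on the simplex, it is the supremum of the linear
functions `p ↦ ∑ p(s) v(s)` lying below it (separate points from its closed convex epigraph).
As `0 < c q < ∞`, some such minorant `v` has `c q < 2 ∑ q(s) v(s)`. Since an unbounded affine `u`
is onto `ℝ`, there are acts `f, g, h` with utility profiles `0, v, 2v`: each of the steps
`f ≿ g` and `g ≿ h` raises the expected utility under `p` by `∑ p(s) v(s) ≤ c p`, but the
composite step `f ≿ h` raises it under `q` by more than `c q`.
-/

theorem IsAffineFn.surjective_of_unbounded {X : Type*} [AddCommGroup X] [Module ℝ X]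
    {u : X → ℝ} (hu : IsAffineFn u) (hub : UnboundedFn u) : Function.Surjective u := by
  obtain ⟨x, hx⟩ := hub |u 0|
  have hne : u x - u 0 ≠ 0 := fun h => by
    rw [sub_eq_zero.mp h] at hx
    exact lt_irrefl _ hx
  intro y
  refine ⟨((y - u 0) / (u x - u 0)) • x + (1 - (y - u 0) / (u x - u 0)) • (0 : X), ?_⟩
  rw [hu x 0]
  field_simp
  ring

theorem vbPref_iff_sum_sub_le {S : Type*} [Fintype S] {X : Type*} (u : X → ℝ)
    (c : (S → ℝ) → ℝ≥0∞) (f g : S → X) :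
    VBPref u c f g ↔ ∀ p : S → ℝ, IsProb p →
      ((∑ s, p s * (u (g s) - u (f s)) : ℝ) : EReal) ≤ c p := by
  refine forall₂_congr fun p _ => ?_
  simp only [mul_sub, sum_sub_distrib, EReal.coe_sub]
  rw [EReal.sub_le_iff_le_add (by simp) (by simp), add_comm]

section Epigraph

variable {S : Type*} [Fintype S]

/-- Heights are kept nonnegative so that `ENNReal.ofReal` is additive on them. -/
def percEpigraph (c : (S → ℝ) → ℝ≥0∞) : Set ((S → ℝ) × ℝ) :=
  {x | IsProb x.1 ∧ 0 ≤ x.2 ∧ c x.1 ≤ ENNReal.ofReal x.2}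

theorem mk_toReal_mem_percEpigraph {c : (S → ℝ) → ℝ≥0∞} {p : S → ℝ} (hp : IsProb p)
    (hpt : c p ≠ ⊤) : (p, (c p).toReal) ∈ percEpigraph c :=
  ⟨hp, toReal_nonneg, (ofReal_toReal hpt).ge⟩

theorem convex_percEpigraph {c : (S → ℝ) → ℝ≥0∞} (hconv : ConvexPerc c) :
    Convex ℝ (percEpigraph c) := by
  rintro x ⟨hx1, hx2, hx3⟩ y ⟨hy1, hy2, hy3⟩ a b ha hb hab
  obtain rfl : b = 1 - a := by linarith
  have hmix : (a • x + (1 - a) • y).1 = fun s => a * x.1 s + (1 - a) * y.1 s := rfl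
  refine ⟨convex_stdSimplex ℝ S hx1 hy1 ha hb hab, ?_, ?_⟩
  · exact add_nonneg (mul_nonneg ha hx2) (mul_nonneg hb hy2)
  · calc c (a • x + (1 - a) • y).1
        ≤ ENNReal.ofReal a * c x.1 + ENNReal.ofReal (1 - a) * c y.1 := by
          rw [hmix]; exact hconv _ _ hx1 hy1 a ha (by linarith)
      _ ≤ ENNReal.ofReal a * ENNReal.ofReal x.2 + ENNReal.ofReal (1 - a) * ENNReal.ofReal y.2 :=
          add_le_add (mul_le_mul_right hx3 _) (mul_le_mul_right hy3 _)
      _ = ENNReal.ofReal (a • x + (1 - a) • y).2 := by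
          rw [← ofReal_mul ha, ← ofReal_mul hb,
            ← ofReal_add (mul_nonneg ha hx2) (mul_nonneg hb hy2)]
          rfl

theorem isClosed_percEpigraph {c : (S → ℝ) → ℝ≥0∞} (hlsc : LowerSemicontinuous c) :
    IsClosed (percEpigraph c) := by
  have hsimplex : IsClosed {x : (S → ℝ) × ℝ | IsProb x.1} :=
    (isClosed_stdSimplex ℝ S).preimage continuous_fst
  have hheight : IsClosed {x : (S → ℝ) × ℝ | 0 ≤ x.2} :=
    isClosed_le continuous_const continuous_snd
  have hgraph : IsClosed {x : (S → ℝ) × ℝ | c x.1 ≤ ENNReal.ofReal x.2} :=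
    (lowerSemicontinuous_iff_isClosed_epigraph.mp hlsc).preimage
      (continuous_id.prodMap ENNReal.continuous_ofReal)
  exact hsimplex.inter (hheight.inter hgraph)

end Epigraph

theorem ContinuousLinearMap.apply_prod_eq_sum {S : Type*} [Fintype S] [DecidableEq S]
    (φ : (S → ℝ) × ℝ →L[ℝ] ℝ) (p : S → ℝ) (t : ℝ) :
    φ (p, t) = ∑ s, p s * φ (Pi.single s 1, 0) + t * φ (0, 1) := by
  have hdecomp : ((p, t) : (S → ℝ) × ℝ) = ∑ s, p s • ((Pi.single s 1 : S → ℝ), (0 : ℝ)) +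
      t • ((0 : S → ℝ), (1 : ℝ)) := by
    ext j <;> simp [Prod.fst_sum, Prod.snd_sum, Finset.sum_apply, Pi.single_apply]
  simp only [hdecomp, map_add, map_sum, map_smul, smul_eq_mul]

theorem ConvexPerc.exists_linear_minorant_gt {S : Type*} [Fintype S] {c : (S → ℝ) → ℝ≥0∞}
    (hconv : ConvexPerc c) (hlsc : LowerSemicontinuous c) {q : S → ℝ} (hq : IsProb q)
    (hqt : c q ≠ ⊤) {r : ℝ} (hr : r < (c q).toReal) :
    ∃ v : S → ℝ, (∀ p, IsProb p → ((∑ s, p s * v s : ℝ) : EReal) ≤ c p) ∧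
      r < ∑ s, q s * v s := by
  classical
  have hout : (q, r) ∉ percEpigraph c := fun ⟨_, hr0, hle⟩ =>
    ((ofReal_lt_iff_lt_toReal hr0 hqt).mpr hr).not_ge hle
  obtain ⟨φ, α, hφq, hφepi⟩ :=
    geometric_hahn_banach_point_closed (convex_percEpigraph hconv) (isClosed_percEpigraph hlsc) hout
  set γ := φ (0, 1)
  have hγ : 0 < γ := by
    have hin := hφepi _ (mk_toReal_mem_percEpigraph hq hqt)
    rw [φ.apply_prod_eq_sum] at hin hφq
    nlinarith
  set v : S → ℝ := fun s => (α - φ (Pi.single s 1, 0)) / γ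
  have hφ : ∀ p t, IsProb p → φ (p, t) = α + γ * (t - ∑ s, p s * v s) := by
    intro p t hp
    have hpv : ∑ s, p s * v s = (α - ∑ s, p s * φ (Pi.single s 1, 0)) / γ := by
      simp only [v, mul_div_assoc', ← sum_div, mul_sub, sum_sub_distrib, ← sum_mul, hp.2, one_mul]
    rw [φ.apply_prod_eq_sum, hpv]
    field_simp
    ring
  refine ⟨v, fun p hp => ?_, ?_⟩
  · by_cases hpt : c p = ⊤
    · simp [hpt]
    have hin := hφepi _ (mk_toReal_mem_percEpigraph hp hpt)
    rw [hφ _ _ hp] at hin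
    rw [← EReal.coe_ennreal_toReal hpt, EReal.coe_le_coe_iff]
    nlinarith
  · rw [hφ _ _ hq] at hφq
    nlinarith

theorem stmt16_general {S : Type*} [Fintype S] {d : ℕ}
    (u : EuclideanSpace ℝ (Fin d) → ℝ) (c : (S → ℝ) → ℝ≥0∞)
    (hu : IsAffineFn u) (hub : UnboundedFn u)
    (hconv : ConvexPerc c) (hlsc : LowerSemicontinuous c)
    (q : S → ℝ) (hq : IsProb q) (hq0 : c q ≠ 0) (hqt : c q ≠ ⊤) :
    ∃ f g h : S → EuclideanSpace ℝ (Fin d),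
      VBPref u c f g ∧ VBPref u c g h ∧ ¬ VBPref u c f h := by
  have hhalf : (c q).toReal / 2 < (c q).toReal := half_lt_self (toReal_pos hq0 hqt)
  obtain ⟨v, hv, hvq⟩ := hconv.exists_linear_minorant_gt hlsc hq hqt hhalf
  choose w hw using hu.surjective_of_unbounded hub
  refine ⟨fun _ => w 0, fun s => w (v s), fun s => w (2 * v s), ?_, ?_, ?_⟩ <;>
    simp only [vbPref_iff_sum_sub_le, hw, sub_zero, two_mul, add_sub_cancel_right]
  · exact hv
  · exact hv
  · intro hle
    have hcq := hle q hq
    rw [← EReal.coe_ennreal_toReal hqt, EReal.coe_le_coe_iff] at hcq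
    simp only [mul_add, sum_add_distrib] at hcq
    linarith

theorem stmt16 {S : Type*} [Fintype S] {d : ℕ}
    (u : EuclideanSpace ℝ (Fin d) → ℝ) (c : (S → ℝ) → ℝ≥0∞)
    (hu : IsAffineFn u) (hub : UnboundedFn u)
    (hc : MinZero c) (hconv : ConvexPerc c) (hlsc : LowerSemicontinuous c)
    (q : S → ℝ) (hq : IsProb q) (hq0 : c q ≠ 0) (hqt : c q ≠ ⊤) :
    ∃ f g h : S → EuclideanSpace ℝ (Fin d),
      VBPref u c f g ∧ VBPref u c g h ∧ ¬ VBPref u c f h :=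
  stmt16_general u c hu hub hconv hlsc q hq hq0 hqt
end

section
/- If affine functions u₁, …, uₙ: X → ℝ on a Euclidean space X satisfy Preference Diversity (for each i there exist x̄ⁱ, x̲ⁱ with uᵢ(x̄ⁱ) > uᵢ(x̲ⁱ) and uⱼ(x̄ⁱ) = uⱼ(x̲ⁱ) for all j ≠ i), then the functions u₁ − u₁(x₀), …, uₙ − uₙ(x₀) (for any fixed x₀) are linearly independent; in particular, the representation u₀ = Σᵢ αᵢuᵢ + β determines (α, β) uniquely. -/
open Finset ENNReal

theorem stmt18 {d n : ℕ}
    (u : Fin n → EuclideanSpace ℝ (Fin d) → ℝ)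
    (hu : ∀ i, IsAffineFn (u i))
    (hdiv : ∀ i, ∃ xb xu : EuclideanSpace ℝ (Fin d),
      u i xu < u i xb ∧ ∀ j, j ≠ i → u j xb = u j xu)
    (x0 : EuclideanSpace ℝ (Fin d)) :
    LinearIndependent ℝ
      (fun i => (fun x => u i x - u i x0 : EuclideanSpace ℝ (Fin d) → ℝ)) ∧
    (∀ (u0 : EuclideanSpace ℝ (Fin d) → ℝ) (α α' : Fin n → ℝ) (β β' : ℝ),
      (∀ x, u0 x = ∑ i, α i * u i x + β) →
      (∀ x, u0 x = ∑ i, α' i * u i x + β') →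
      α = α' ∧ β = β') := by
  -- Key: if a linear combination of the uᵢ is constant, all coefficients vanish.
  have key : ∀ c : Fin n → ℝ,
      (∀ x y : EuclideanSpace ℝ (Fin d), ∑ i, c i * u i x = ∑ i, c i * u i y) →
      ∀ i, c i = 0 := by
    intro c hc i
    obtain ⟨xb, xu, hlt, heq⟩ := hdiv i
    have h := hc xb xu
    have h2 : ∑ j, c j * (u j xb - u j xu) = 0 := by
      simp only [mul_sub, Finset.sum_sub_distrib, h, sub_self]
    rw [Finset.sum_eq_single i (fun j _ hj => by rw [heq j hj, sub_self, mul_zero])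
      (fun h => absurd (Finset.mem_univ i) h)] at h2
    rcases mul_eq_zero.mp h2 with h3 | h3
    · exact h3
    · exact absurd (sub_eq_zero.mp h3) (ne_of_gt hlt)
  constructor
  · rw [Fintype.linearIndependent_iff]
    intro g hg i
    apply key g _ i
    intro x y
    have hx := congrFun hg x
    have hy := congrFun hg y
    simp only [Finset.sum_apply, Pi.smul_apply, Pi.zero_apply, smul_eq_mul] at hx hy
    have hx' : ∑ j, g j * u j x = ∑ j, g j * u j x0 := by
      have := hx
      simp only [mul_sub, Finset.sum_sub_distrib, sub_eq_zero] at this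
      exact this
    have hy' : ∑ j, g j * u j y = ∑ j, g j * u j x0 := by
      have := hy
      simp only [mul_sub, Finset.sum_sub_distrib, sub_eq_zero] at this
      exact this
    rw [hx', hy']
  · intro u0 α α' β β' h1 h2
    have hαα' : α = α' := by
      funext i
      have hc : ∀ x y : EuclideanSpace ℝ (Fin d),
          ∑ j, (α j - α' j) * u j x = ∑ j, (α j - α' j) * u j y := by
        intro x y
        have hx : ∑ j, (α j - α' j) * u j x = β' - β := by
          have := (h1 x).symm.trans (h2 x)
          simp only [sub_mul, Finset.sum_sub_distrib]
          linarith
        have hy : ∑ j, (α j - α' j) * u j y = β' - β := by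
          have := (h1 y).symm.trans (h2 y)
          simp only [sub_mul, Finset.sum_sub_distrib]
          linarith
        rw [hx, hy]
      have := key _ hc i
      linarith [this]
    refine ⟨hαα', ?_⟩
    have := (h1 x0).symm.trans (h2 x0)
    rw [hαα'] at this
    linarith
end

section
/- Utilitarian aggregation preserves Pareto on constant acts: if u₀ = Σ_{i∈N} αᵢuᵢ + β with αᵢ ≥ 0, then for all x, y ∈ X, uᵢ(x) ≥ uᵢ(y) for all i ∈ N implies u₀(x) ≥ u₀(y); conversely (Harsanyi/De Meyer–Mongin), if each ≿ᵢ restricted to constant acts is represented by affine uᵢ and Pareto holds on constant acts, then u₀ = Σᵢ αᵢuᵢ + β for some α ∈ ℝⁿ₊, β ∈ ℝ, provided Preference Diversity holds. -/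
open Finset ENNReal

lemma affine_linearMap {X : Type*} [AddCommGroup X] [Module ℝ X] (u : X → ℝ)
    (h : IsAffineFn u) : ∃ ℓ : X →ₗ[ℝ] ℝ, ∀ x, u x = ℓ x + u 0 := by
  have hsmul : ∀ (t : ℝ) (x : X), u (t • x) = t * u x + (1 - t) * u 0 := by
    intro t x
    have := h x 0 t
    simpa using this
  have hadd : ∀ x y : X, u (x + y) = u x + u y - u 0 := by
    intro x y
    have h1 := h x y (1/2 : ℝ)
    have h2 := hsmul 2 ((1/2 : ℝ) • x + (1 - 1/2 : ℝ) • y)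
    have hxy : (2 : ℝ) • ((1/2 : ℝ) • x + (1 - 1/2 : ℝ) • y) = x + y := by
      rw [smul_add, smul_smul, smul_smul]; norm_num
    rw [hxy, h1] at h2
    linarith
  refine ⟨{ toFun := fun x => u x - u 0,
            map_add' := fun x y => by have := hadd x y; linarith,
            map_smul' := fun t x => by have := hsmul t x; simp [this]; ring }, ?_⟩
  intro x; simp

theorem stmt19 {d n : ℕ}
    (u : Fin n → EuclideanSpace ℝ (Fin d) → ℝ)
    (u0 : EuclideanSpace ℝ (Fin d) → ℝ)
    (hu : ∀ i, IsAffineFn (u i)) (hu0 : IsAffineFn u0)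
    (hnc : ∀ i, ∃ x y, u i x ≠ u i y) (hnc0 : ∃ x y, u0 x ≠ u0 y) :
    -- utilitarian aggregation preserves Pareto on constant acts
    (∀ (α : Fin n → ℝ) (β : ℝ), (∀ i, 0 ≤ α i) →
      (∀ x, u0 x = ∑ i, α i * u i x + β) →
      ∀ x y, (∀ i, u i y ≤ u i x) → u0 y ≤ u0 x) ∧
    -- converse (Harsanyi / De Meyer–Mongin), under Preference Diversity
    ((∀ i, ∃ xb xu : EuclideanSpace ℝ (Fin d),
        u i xu < u i xb ∧ ∀ j, j ≠ i → u j xb = u j xu) →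
      (∀ x y, (∀ i, u i y ≤ u i x) → u0 y ≤ u0 x) →
      ∃ (α : Fin n → ℝ) (β : ℝ), (∀ i, 0 ≤ α i) ∧
        ∀ x, u0 x = ∑ i, α i * u i x + β) := by
  constructor
  · intro α β hα hrep x y hxy
    rw [hrep x, hrep y]
    have : ∀ i, α i * u i y ≤ α i * u i x := fun i =>
      mul_le_mul_of_nonneg_left (hxy i) (hα i)
    have hsum : ∑ i, α i * u i y ≤ ∑ i, α i * u i x :=
      Finset.sum_le_sum fun i _ => this i
    linarith
  · intro hdiv hpar
    choose ℓ hℓ using fun i => affine_linearMap (u i) (hu i)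
    obtain ⟨ℓ0, hℓ0⟩ := affine_linearMap u0 hu0
    choose xb xu hlt heq using hdiv
    set z : Fin n → EuclideanSpace ℝ (Fin d) := fun i => xb i - xu i with hzdef
    have hz : ∀ j i, ℓ j (z i) = u j (xb i) - u j (xu i) := by
      intro j i
      rw [hzdef]
      simp only [map_sub]
      rw [hℓ j (xb i), hℓ j (xu i)]
      ring
    have hzpos : ∀ i, 0 < ℓ i (z i) := fun i => by rw [hz]; linarith [hlt i]
    have hzzero : ∀ j i, j ≠ i → ℓ j (z i) = 0 := fun j i hji => by
      rw [hz, heq i j hji]; ring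
    -- Pareto in terms of linear parts
    have hP : ∀ v, (∀ i, 0 ≤ ℓ i v) → 0 ≤ ℓ0 v := by
      intro v hv
      have key : ∀ i, u i 0 ≤ u i v := fun i => by
        rw [hℓ i v, hℓ i 0, map_zero]; linarith [hv i]
      have := hpar v 0 key
      rw [hℓ0 v, hℓ0 0, map_zero] at this
      linarith
    refine ⟨fun i => ℓ0 (z i) / ℓ i (z i), u0 0 - ∑ i, (ℓ0 (z i) / ℓ i (z i)) * u i 0,
      fun i => ?_, fun x => ?_⟩
    · have h0 : 0 ≤ ℓ0 (z i) := hP (z i) (fun j => by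
        rcases eq_or_ne j i with rfl | hji
        · exact (hzpos j).le
        · rw [hzzero j i hji])
      exact div_nonneg h0 (hzpos i).le
    · -- main identity
      have hmain : ∀ v, ℓ0 v = ∑ i, (ℓ0 (z i) / ℓ i (z i)) * ℓ i v := by
        intro v
        set w := v - ∑ i, (ℓ i v / ℓ i (z i)) • z i with hwdef
        have hw : ∀ j, ℓ j w = 0 := by
          intro j
          rw [hwdef, map_sub, map_sum]
          simp only [map_smul, smul_eq_mul]
          rw [Finset.sum_eq_single j (fun i _ hij => by rw [hzzero j i (Ne.symm hij)]; ring)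
            (fun h => absurd (Finset.mem_univ j) h)]
          rw [div_mul_cancel₀ _ (hzpos j).ne', sub_self]
        have hw0 : ℓ0 w = 0 := by
          have h1 := hP w (fun i => (hw i).ge)
          have h2 := hP (-w) (fun i => by rw [map_neg, hw i]; norm_num)
          rw [map_neg] at h2
          linarith
        have : ℓ0 v = ℓ0 w + ∑ i, (ℓ i v / ℓ i (z i)) * ℓ0 (z i) := by
          rw [hwdef, map_sub, map_sum]
          simp only [map_smul, smul_eq_mul]
          ring
        rw [hw0] at this
        rw [this]
        rw [zero_add]
        apply Finset.sum_congr rfl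
        intro i _
        field_simp
      have hl' : ∀ i y, ℓ i y = u i y - u i 0 := fun i y => by rw [hℓ i y]; ring
      rw [hℓ0 x, hmain x]
      simp only [hl', mul_sub]
      rw [Finset.sum_sub_distrib]
      ring
end
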